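/- Let φ(u,s) = (√(1 − u + s²) + s)² / ((1 − u)²·√(1 − u + s²)) on the open set {(u,s) ∈ ℝ² : 0 ≤ s² ≤ u < 1} (where φ > 0), and set ψ := (φ₂ + 2s·φ₁)/(2φ). Then ψ² − (ψ₂ + 2s·ψ₁) = 0. Equivalently, φ satisfies the Einstein PDE (∗∗) with μ = 0 and K = 0 for every κ. -/

import Mathlib

/-- First partial derivative of `f = f(u,s)` with respect to `u`. -/
noncomputable def pd1 (f : ℝ → ℝ → ℝ) (u s : ℝ) : ℝ := deriv (fun t => f t s) u

/-- First partial derivative of `f = f(u,s)` with respect to `s`. -/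
noncomputable def pd2 (f : ℝ → ℝ → ℝ) (u s : ℝ) : ℝ := deriv (f u) s

/-- `ψ := (φ₂ + 2s·φ₁)/(2φ)`. -/
noncomputable def psi (f : ℝ → ℝ → ℝ) (u s : ℝ) : ℝ :=
  (pd2 f u s + 2 * s * pd1 f u s) / (2 * f u s)

/-- The defining function of the square metric in navigation-type form. -/
noncomputable def phi (u s : ℝ) : ℝ :=
  (Real.sqrt (1 - u + s ^ 2) + s) ^ 2 / ((1 - u) ^ 2 * Real.sqrt (1 - u + s ^ 2))

/-!
Write `w = √(1 - u + s²)`. Since `1 - u = w² - s² = (w - s)(w + s)`, the function is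
`φ = (w - s)⁻² · w⁻¹`. The operator `D = ∂ₛ + 2s ∂ᵤ` kills `w` and sends `w - s` to `-1`, so
`D (w - s)⁻¹ = (w - s)⁻²`. Hence `ψ = Dφ / (2φ) = (w - s)⁻¹` and `Dψ = ψ²`.
-/

open Real

section SquareMetric

variable {u : ℝ} (s : ℝ)

lemma abs_lt_sqrt_one_sub_add_sq (hu : u < 1) : |s| < √(1 - u + s ^ 2) :=
  Real.lt_sqrt_of_sq_lt (by rw [sq_abs]; linarith)

lemma sqrt_one_sub_add_sq_pos (hu : u < 1) : 0 < √(1 - u + s ^ 2) :=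
  (abs_nonneg s).trans_lt (abs_lt_sqrt_one_sub_add_sq s hu)

lemma sqrt_one_sub_add_sq_sub_pos (hu : u < 1) : 0 < √(1 - u + s ^ 2) - s :=
  sub_pos.2 (abs_lt.1 (abs_lt_sqrt_one_sub_add_sq s hu)).2

lemma sqrt_one_sub_add_sq_add_pos (hu : u < 1) : 0 < √(1 - u + s ^ 2) + s :=
  neg_lt_iff_pos_add'.1 (abs_lt.1 (abs_lt_sqrt_one_sub_add_sq s hu)).1

lemma hasDerivAt_sqrt_one_sub_add_sq_fst (hu : u < 1) :
    HasDerivAt (fun t => √(1 - t + s ^ 2)) (-(2 * √(1 - u + s ^ 2))⁻¹) u := by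
  refine (((hasDerivAt_id' u).const_sub 1).add_const (s ^ 2)).sqrt (by nlinarith)
    |>.congr_deriv ?_
  field_simp

lemma hasDerivAt_sqrt_one_sub_add_sq_snd (hu : u < 1) :
    HasDerivAt (fun y => √(1 - u + y ^ 2)) (s / √(1 - u + s ^ 2)) s := by
  refine ((hasDerivAt_pow 2 s).const_add (1 - u)).sqrt (by nlinarith) |>.congr_deriv ?_
  field_simp
  ring

lemma hasDerivAt_inv_sqrt_sub_fst (hu : u < 1) :
    HasDerivAt (fun t => (√(1 - t + s ^ 2) - s)⁻¹)
      ((2 * √(1 - u + s ^ 2))⁻¹ * (√(1 - u + s ^ 2) - s)⁻¹ ^ 2) u := by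
  refine ((hasDerivAt_sqrt_one_sub_add_sq_fst s hu).sub_const s).inv
    (sqrt_one_sub_add_sq_sub_pos s hu).ne' |>.congr_deriv ?_
  field_simp

lemma hasDerivAt_inv_sqrt_sub_snd (hu : u < 1) :
    HasDerivAt (fun y => (√(1 - u + y ^ 2) - y)⁻¹)
      ((1 - s / √(1 - u + s ^ 2)) * (√(1 - u + s ^ 2) - s)⁻¹ ^ 2) s := by
  refine ((hasDerivAt_sqrt_one_sub_add_sq_snd s hu).sub (hasDerivAt_id' s)).inv
    (sqrt_one_sub_add_sq_sub_pos s hu).ne' |>.congr_deriv ?_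
  simp only [Pi.sub_apply]
  field_simp
  ring

lemma phi_eq (hu : u < 1) : phi u s = (√(1 - u + s ^ 2) - s)⁻¹ ^ 2 / √(1 - u + s ^ 2) := by
  have h1u : 1 - u = (√(1 - u + s ^ 2) - s) * (√(1 - u + s ^ 2) + s) := by
    linear_combination -Real.sq_sqrt (show 0 ≤ 1 - u + s ^ 2 by nlinarith)
  have hws := sqrt_one_sub_add_sq_add_pos s hu
  rw [phi]
  set w := √(1 - u + s ^ 2)
  rw [h1u]
  field_simp

lemma pd2_add_two_mul_pd1_phi (hu : u < 1) :
    pd2 phi u s + 2 * s * pd1 phi u s = 2 * (√(1 - u + s ^ 2) - s)⁻¹ * phi u s := by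
  have hw := (sqrt_one_sub_add_sq_pos s hu).ne'
  have hws := (sqrt_one_sub_add_sq_sub_pos s hu).ne'
  have hev : ∀ᶠ t in nhds u, phi t s = (√(1 - t + s ^ 2) - s)⁻¹ ^ 2 / √(1 - t + s ^ 2) :=
    (eventually_lt_nhds hu).mono fun t ht => phi_eq s ht
  have hs : phi u = fun y => (√(1 - u + y ^ 2) - y)⁻¹ ^ 2 / √(1 - u + y ^ 2) :=
    funext fun y => phi_eq y hu
  have h1 := (((hasDerivAt_inv_sqrt_sub_fst s hu).fun_pow 2).fun_div
    (hasDerivAt_sqrt_one_sub_add_sq_fst s hu) hw).congr_of_eventuallyEq hev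
  have h2 := ((hasDerivAt_inv_sqrt_sub_snd s hu).fun_pow 2).fun_div
    (hasDerivAt_sqrt_one_sub_add_sq_snd s hu) hw
  rw [pd1, pd2, h1.deriv, phi_eq s hu, hs, h2.deriv]
  simp only [Nat.cast_ofNat, Nat.add_one_sub_one, pow_one]
  field_simp
  ring

lemma psi_phi_eq (hu : u < 1) : psi phi u s = (√(1 - u + s ^ 2) - s)⁻¹ := by
  have hphi : phi u s ≠ 0 := by
    rw [phi_eq s hu]
    have := sqrt_one_sub_add_sq_pos s hu
    have := sqrt_one_sub_add_sq_sub_pos s hu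
    positivity
  rw [psi, pd2_add_two_mul_pd1_phi s hu]
  field_simp

lemma pd2_add_two_mul_pd1_psi_phi (hu : u < 1) :
    pd2 (psi phi) u s + 2 * s * pd1 (psi phi) u s = psi phi u s ^ 2 := by
  have hev : ∀ᶠ t in nhds u, psi phi t s = (√(1 - t + s ^ 2) - s)⁻¹ :=
    (eventually_lt_nhds hu).mono fun t ht => psi_phi_eq s ht
  have hs : psi phi u = fun y => (√(1 - u + y ^ 2) - y)⁻¹ :=
    funext fun y => psi_phi_eq y hu
  rw [pd1, pd2, ((hasDerivAt_inv_sqrt_sub_fst s hu).congr_of_eventuallyEq hev).deriv,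
    psi_phi_eq s hu, hs, (hasDerivAt_inv_sqrt_sub_snd s hu).deriv]
  field_simp
  ring

end SquareMetric

/-- For `φ(u,s) = (√(1 − u + s²) + s)²/((1 − u)²·√(1 − u + s²))` on
`{0 ≤ s² ≤ u < 1}`, with `ψ := (φ₂ + 2s·φ₁)/(2φ)`, one has
`ψ² − (ψ₂ + 2s·ψ₁) = 0`; equivalently, φ satisfies the Einstein PDE (∗∗) with
`μ = 0` and `K = 0` for every `κ`. -/
theorem stmt_4 : ∀ u s : ℝ, s ^ 2 ≤ u → u < 1 →
    ((psi phi u s) ^ 2 - (pd2 (psi phi) u s + 2 * s * pd1 (psi phi) u s) = 0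
      ∧ ∀ κ : ℝ, (κ - 0 * u) *
          ((psi phi u s) ^ 2 - (pd2 (psi phi) u s + 2 * s * pd1 (psi phi) u s))
          + 0 * s * psi phi u s + 0 = 0 * (phi u s) ^ 2) := by
  intro u s _ hu
  have h := pd2_add_two_mul_pd1_psi_phi s hu
  exact ⟨by rw [h, sub_self], fun κ => by rw [h]; ring⟩
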